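/- Let n_c, n_f, n_pk, n_pv ≥ 1 be integers and let B, N ∈ ℝ^{n_f×n_f} be diagonal matrices. Let R_k ∈ ℝ^{n_f×n_pk} and R_v ∈ ℝ^{n_f×n_pv} satisfy R_k·1 = R_v·1 (equal row sums). Let f* : ℝ^{n_c} × ℝ^{n_c} → ℝ^{n_c} be a symmetric two-point flux (f*(a,b) = f*(b,a)) satisfying the Tadmor condition with respect to W̃ : ℝ^{n_c} → ℝ^{n_c} and ψ̃ : ℝ^{n_c} → ℝ. Let u_k (n_pk nodes) and u_v (n_pv nodes) be node-state arrays in ℝ^{n_c}, and let w_k, w_v denote the concatenations of W̃(u_{k,j}), W̃(u_{v,j}), and ψ_k, ψ_v the vectors with entries ψ̃(u_{k,j}), ψ̃(u_{v,j}). Set E^{kv} = R_k^T B N R_v, E^{vk} = −R_v^T B N R_k, E^{kk} = R_k^T B N R_k and E^{vv} = −R_v^T B N R_v. Then: ½·w_k^T·(Ē^{kv} ∘ F(u_k, u_v))·1 + ½·w_v^T·(Ē^{vk} ∘ F(u_v, u_k))·1 = 1^T·E^{kk}·ψ_k + 1^T·E^{vv}·ψ_v. -/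
import Mathlib


open Matrix

/-- `M̄ = M ⊗ I_{n_c}`: the Kronecker product of a matrix with the `nc × nc`
identity, indexed by pairs (node, component). -/
def blockMat {n m : ℕ} (nc : ℕ) (M : Matrix (Fin n) (Fin m) ℝ) :
    Matrix (Fin n × Fin nc) (Fin m × Fin nc) ℝ :=
  Matrix.of fun jp lq => M jp.1 lq.1 * (if jp.2 = lq.2 then 1 else 0)

/-- Concatenation of a node-state array into a vector of `ℝ^{n·n_c}`. -/
def concatVec {n nc : ℕ} (u : Fin n → Fin nc → ℝ) : Fin n × Fin nc → ℝ :=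
  fun jp => u jp.1 jp.2

/-- The block matrix `F(u, v)` whose `(j, l)` block of size `nc × nc` is
`2·diag(f*(u_j, v_l))`. -/
def fluxMat {n m nc : ℕ} (fstar : (Fin nc → ℝ) → (Fin nc → ℝ) → Fin nc → ℝ)
    (u : Fin n → Fin nc → ℝ) (v : Fin m → Fin nc → ℝ) :
    Matrix (Fin n × Fin nc) (Fin m × Fin nc) ℝ :=
  Matrix.of fun jp lq => if jp.2 = lq.2 then 2 * fstar (u jp.1) (v lq.1) jp.2 else 0

lemma key {n m nc : ℕ} (E : Matrix (Fin n) (Fin m) ℝ)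
    (fstar : (Fin nc → ℝ) → (Fin nc → ℝ) → Fin nc → ℝ)
    (u : Fin n → Fin nc → ℝ) (v : Fin m → Fin nc → ℝ) (w : Fin n → Fin nc → ℝ) :
    concatVec w ⬝ᵥ ((blockMat nc E).hadamard (fluxMat fstar u v) *ᵥ 1)
      = ∑ j, ∑ l, E j l * (2 * ∑ c, w j c * fstar (u j) (v l) c) := by
  simp only [dotProduct, Matrix.mulVec, Matrix.hadamard_apply, blockMat, fluxMat, concatVec,
    Matrix.of_apply, Pi.one_apply, mul_one, dotProduct]
  rw [Fintype.sum_prod_type]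
  refine Finset.sum_congr rfl fun j _ => ?_
  simp only [Fintype.sum_prod_type]
  have inner : ∀ c : Fin nc,
      (∑ l, ∑ d, (E j l * if c = d then (1:ℝ) else 0) *
        if c = d then 2 * fstar (u j) (v l) c else 0)
      = ∑ l, E j l * (2 * fstar (u j) (v l) c) := by
    intro c
    refine Finset.sum_congr rfl fun l _ => ?_
    rw [Finset.sum_eq_single c]
    · simp
    · intro d _ hd; simp [Ne.symm hd]
    · simp
  simp only [inner]
  simp only [Finset.mul_sum]
  rw [Finset.sum_comm]
  exact Finset.sum_congr rfl fun l _ => Finset.sum_congr rfl fun c _ => by ring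

lemma symm_entry {q r s : ℕ} (A : Matrix (Fin q) (Fin q) ℝ)
    (hA : ∀ i i', A i i' = A i' i)
    (R : Matrix (Fin q) (Fin r) ℝ) (R' : Matrix (Fin q) (Fin s) ℝ)
    (j : Fin r) (l : Fin s) :
    (Rᵀ * A * R') j l = (R'ᵀ * A * R) l j := by
  simp only [Matrix.mul_apply, Matrix.transpose_apply, Finset.sum_mul]
  rw [Finset.sum_comm]
  exact Finset.sum_congr rfl fun i _ => Finset.sum_congr rfl fun i' _ => by
    rw [hA i' i]; ring

lemma rowsum_eq {p q r s : ℕ} (C : Matrix (Fin p) (Fin q) ℝ)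
    (R : Matrix (Fin q) (Fin r) ℝ) (R' : Matrix (Fin q) (Fin s) ℝ)
    (h : ∀ i, ∑ l, R i l = ∑ l, R' i l) (j : Fin p) :
    ∑ l, (C * R) j l = ∑ l, (C * R') j l := by
  simp only [Matrix.mul_apply]
  rw [Finset.sum_comm]
  rw [Finset.sum_comm (f := fun l i => C j i * R' i l)]
  simp only [← Finset.mul_sum, h]

lemma colsum_eq {q r s t : ℕ} (R : Matrix (Fin q) (Fin r) ℝ)
    (R' : Matrix (Fin q) (Fin s) ℝ) (D : Matrix (Fin q) (Fin t) ℝ)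
    (h : ∀ i, ∑ j, R i j = ∑ j, R' i j) (l : Fin t) :
    ∑ j, (Rᵀ * D) j l = ∑ j, (R'ᵀ * D) j l := by
  simp only [Matrix.mul_apply, Matrix.transpose_apply]
  rw [Finset.sum_comm]
  rw [Finset.sum_comm (f := fun j i => R' i j * D i l)]
  simp only [← Finset.sum_mul, h]

/-- **Interface lemma.** For a symmetric two-point flux satisfying the Tadmor
condition, with `E^{kv} = R_kᵀ B N R_v`, `E^{vk} = −R_vᵀ B N R_k`,
`E^{kk} = R_kᵀ B N R_k`, `E^{vv} = −R_vᵀ B N R_v`, and extrapolation matrices of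
equal row sums, the interface entropy contributions reduce to potential-flux
terms:
`½·w_kᵀ(Ē^{kv} ∘ F(u_k,u_v))·1 + ½·w_vᵀ(Ē^{vk} ∘ F(u_v,u_k))·1
  = 1ᵀ E^{kk} ψ_k + 1ᵀ E^{vv} ψ_v`. -/
theorem interface_sat_entropy_eq_potential_flux
    (nc nf npk npv : ℕ) (hnc : 1 ≤ nc) (hnf : 1 ≤ nf) (hnpk : 1 ≤ npk)
    (hnpv : 1 ≤ npv)
    (B N : Matrix (Fin nf) (Fin nf) ℝ) (hB : B.IsDiag) (hN : N.IsDiag)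
    (Rk : Matrix (Fin nf) (Fin npk) ℝ) (Rv : Matrix (Fin nf) (Fin npv) ℝ)
    (hones : Rk *ᵥ 1 = Rv *ᵥ 1)
    (fstar : (Fin nc → ℝ) → (Fin nc → ℝ) → Fin nc → ℝ)
    (hsym : ∀ a b, fstar a b = fstar b a)
    (Wt : (Fin nc → ℝ) → Fin nc → ℝ) (ψt : (Fin nc → ℝ) → ℝ)
    (hTadmor : ∀ a b, (∑ c, (Wt b c - Wt a c) * fstar a b c) = ψt b - ψt a)
    (uk : Fin npk → Fin nc → ℝ) (uv : Fin npv → Fin nc → ℝ) :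
    (1 / 2 : ℝ) * (concatVec (fun j => Wt (uk j)) ⬝ᵥ
        ((blockMat nc (Rkᵀ * B * N * Rv)).hadamard (fluxMat fstar uk uv) *ᵥ 1))
      + (1 / 2 : ℝ) * (concatVec (fun j => Wt (uv j)) ⬝ᵥ
        ((blockMat nc (-(Rvᵀ * B * N * Rk))).hadamard (fluxMat fstar uv uk) *ᵥ 1))
      = (1 : Fin npk → ℝ) ⬝ᵥ ((Rkᵀ * B * N * Rk) *ᵥ (fun j => ψt (uk j)))
        + (1 : Fin npv → ℝ) ⬝ᵥ ((-(Rvᵀ * B * N * Rv)) *ᵥ (fun j => ψt (uv j))) := by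
  -- notation
  set A : Matrix (Fin nf) (Fin nf) ℝ := B * N with hAdef
  have hAdiag : A.IsDiag := by
    intro i i' h
    rw [hAdef, Matrix.mul_apply]
    refine Finset.sum_eq_zero fun k _ => ?_
    by_cases hk : i = k
    · subst hk; rw [hN h, mul_zero]
    · rw [hB hk, zero_mul]
  have hA : ∀ i i', A i i' = A i' i := by
    intro i i'
    by_cases h : i = i'
    · rw [h]
    · rw [hAdiag h, hAdiag (Ne.symm h)]
  have hassoc_k : Rkᵀ * B * N = Rkᵀ * A := Matrix.mul_assoc _ _ _
  have hassoc_v : Rvᵀ * B * N = Rvᵀ * A := Matrix.mul_assoc _ _ _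
  rw [hassoc_k, hassoc_v]
  -- row sums of Rk and Rv agree
  have hsum : ∀ i, ∑ l, Rk i l = ∑ l, Rv i l := by
    intro i
    have := congrFun hones i
    simpa [Matrix.mulVec, dotProduct] using this
  rw [key, key]
  -- expand the RHS dot products
  have rhs1 : (1 : Fin npk → ℝ) ⬝ᵥ ((Rkᵀ * A * Rk) *ᵥ (fun j => ψt (uk j)))
      = ∑ j, ∑ l, (Rkᵀ * A * Rk) j l * ψt (uk l) := by
    simp [dotProduct, Matrix.mulVec]
  have rhs2 : (1 : Fin npv → ℝ) ⬝ᵥ ((-(Rvᵀ * A * Rv)) *ᵥ (fun j => ψt (uv j)))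
      = -∑ j, ∑ l, (Rvᵀ * A * Rv) j l * ψt (uv l) := by
    simp [dotProduct, Matrix.mulVec, Finset.sum_neg_distrib]
  rw [rhs1, rhs2]
  -- massage the left side
  have step1 : (1 / 2 : ℝ) * (∑ j, ∑ l, (Rkᵀ * A * Rv) j l *
        (2 * ∑ c, Wt (uk j) c * fstar (uk j) (uv l) c))
      + (1 / 2 : ℝ) * (∑ l, ∑ j, (-(Rvᵀ * A * Rk)) l j *
        (2 * ∑ c, Wt (uv l) c * fstar (uv l) (uk j) c))
      = ∑ j, ∑ l, (Rkᵀ * A * Rv) j l * (ψt (uk j) - ψt (uv l)) := by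
    rw [Finset.sum_comm (f := fun l j => (-(Rvᵀ * A * Rk)) l j *
      (2 * ∑ c, Wt (uv l) c * fstar (uv l) (uk j) c))]
    rw [Finset.mul_sum, Finset.mul_sum, ← Finset.sum_add_distrib]
    refine Finset.sum_congr rfl fun j _ => ?_
    rw [Finset.mul_sum, Finset.mul_sum, ← Finset.sum_add_distrib]
    refine Finset.sum_congr rfl fun l _ => ?_
    rw [Matrix.neg_apply, symm_entry A hA Rv Rk l j, hsym (uv l) (uk j)]
    have hT : (∑ c, Wt (uv l) c * fstar (uk j) (uv l) c)
          - (∑ c, Wt (uk j) c * fstar (uk j) (uv l) c)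
        = ψt (uv l) - ψt (uk j) := by
      rw [← hTadmor (uk j) (uv l), ← Finset.sum_sub_distrib]
      exact Finset.sum_congr rfl fun c _ => by ring
    linear_combination (-(Rkᵀ * A * Rv) j l) * hT
  rw [step1]
  -- split and identify with the RHS
  have split : ∑ j, ∑ l, (Rkᵀ * A * Rv) j l * (ψt (uk j) - ψt (uv l))
      = (∑ j, (∑ l, (Rkᵀ * A * Rv) j l) * ψt (uk j))
        - ∑ l, (∑ j, (Rkᵀ * A * Rv) j l) * ψt (uv l) := by
    calc ∑ j, ∑ l, (Rkᵀ * A * Rv) j l * (ψt (uk j) - ψt (uv l))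
        = (∑ j, ∑ l, (Rkᵀ * A * Rv) j l * ψt (uk j))
          - ∑ j, ∑ l, (Rkᵀ * A * Rv) j l * ψt (uv l) := by
          rw [← Finset.sum_sub_distrib]
          refine Finset.sum_congr rfl fun j _ => ?_
          rw [← Finset.sum_sub_distrib]
          exact Finset.sum_congr rfl fun l _ => by ring
      _ = (∑ j, (∑ l, (Rkᵀ * A * Rv) j l) * ψt (uk j))
          - ∑ l, (∑ j, (Rkᵀ * A * Rv) j l) * ψt (uv l) := by
          congr 1
          · exact Finset.sum_congr rfl fun j _ => (Finset.sum_mul _ _ _).symm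
          · rw [Finset.sum_comm]
            exact Finset.sum_congr rfl fun l _ => (Finset.sum_mul _ _ _).symm
  rw [split]
  have term1 : (∑ j, (∑ l, (Rkᵀ * A * Rv) j l) * ψt (uk j))
      = ∑ j, ∑ l, (Rkᵀ * A * Rk) j l * ψt (uk l) := by
    have h1 : ∀ j, (∑ l, (Rkᵀ * A * Rv) j l) = ∑ l, (Rkᵀ * A * Rk) j l :=
      fun j => rowsum_eq (Rkᵀ * A) Rv Rk (fun i => (hsum i).symm) j
    calc (∑ j, (∑ l, (Rkᵀ * A * Rv) j l) * ψt (uk j))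
        = ∑ j, ∑ l, (Rkᵀ * A * Rk) j l * ψt (uk j) := by
          simp only [h1, Finset.sum_mul]
      _ = ∑ l, ∑ j, (Rkᵀ * A * Rk) l j * ψt (uk l) := rfl
      _ = ∑ j, ∑ l, (Rkᵀ * A * Rk) l j * ψt (uk l) := Finset.sum_comm
      _ = ∑ j, ∑ l, (Rkᵀ * A * Rk) j l * ψt (uk l) := by
          refine Finset.sum_congr rfl fun j _ => Finset.sum_congr rfl fun l _ => ?_
          rw [symm_entry A hA Rk Rk l j]
  have term2 : (∑ l, (∑ j, (Rkᵀ * A * Rv) j l) * ψt (uv l))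
      = ∑ j, ∑ l, (Rvᵀ * A * Rv) j l * ψt (uv l) := by
    have h2 : ∀ l, (∑ j, (Rkᵀ * A * Rv) j l) = ∑ j, (Rvᵀ * A * Rv) j l := by
      intro l
      have h := colsum_eq Rk Rv (A * Rv) hsum l
      rwa [← Matrix.mul_assoc Rkᵀ A Rv, ← Matrix.mul_assoc Rvᵀ A Rv] at h
    calc (∑ l, (∑ j, (Rkᵀ * A * Rv) j l) * ψt (uv l))
        = ∑ l, ∑ j, (Rvᵀ * A * Rv) j l * ψt (uv l) := by
          simp only [h2, Finset.sum_mul]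
      _ = ∑ j, ∑ l, (Rvᵀ * A * Rv) j l * ψt (uv l) := Finset.sum_comm
  rw [term1, term2]
  ring
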